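/- arXiv:1804.02221 — 2 statements merged into one kernel-verified Lean document; each statement's English description precedes it below -/
import Mathlib

section
/- With θ = min(1, h̄ / (h̄ - m)) where m = min_i h_i < h̄ and h̄ = Σ ω_i h_i ≥ 0 is the weighted average water height, the limited values ĥ_i = θ(h_i - h̄) + h̄ are all nonnegative. -/
lemma mul_sub_add_nonneg_of_le {a m x θ : ℝ} (hmx : m ≤ x) (hθ : 0 ≤ θ)
    (hθm : θ * (a - m) ≤ a) : 0 ≤ θ * (x - a) + a :=
  calc 0 ≤ a - θ * (a - m) := sub_nonneg.2 hθm
    _ = θ * (m - a) + a := by ring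
    _ ≤ θ * (x - a) + a := by gcongr

theorem limiter_nonneg_general
    {M : ℕ} (h : Fin (M + 1) → ℝ)
    (hbar : ℝ) (hbar_nonneg : 0 ≤ hbar)
    (m : ℝ) (hm : m = Finset.univ.inf' Finset.univ_nonempty h) (hmlt : m < hbar)
    (θ : ℝ) (hθ : θ = min 1 (hbar / (hbar - m))) :
    ∀ i, 0 ≤ θ * (h i - hbar) + hbar := by
  intro i
  have hgap : 0 < hbar - m := sub_pos.2 hmlt
  subst hθ
  refine mul_sub_add_nonneg_of_le (m := m) ?_ ?_ ?_
  · exact hm ▸ Finset.inf'_le h (Finset.mem_univ i)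
  · exact le_min zero_le_one (div_nonneg hbar_nonneg hgap.le)
  · exact (le_div_iff₀ hgap).1 (min_le_right _ _)

/-- With `θ = min(1, h̄/(h̄ - m))`, `m = minᵢ hᵢ < h̄`, `h̄ ≥ 0` the weighted mean,
the limited water heights `ĥᵢ = θ(hᵢ - h̄) + h̄` are nonnegative. -/
theorem limiter_nonneg
    {M : ℕ} (h : Fin (M + 1) → ℝ) (ω : Fin (M + 1) → ℝ)
    (hω : ∀ i, 0 < ω i) (hsum : ∑ i, ω i = 1)
    (hbar : ℝ) (hbar_def : hbar = ∑ i, ω i * h i) (hbar_nonneg : 0 ≤ hbar)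
    (m : ℝ) (hm : m = Finset.univ.inf' Finset.univ_nonempty h) (hmlt : m < hbar)
    (θ : ℝ) (hθ : θ = min 1 (hbar / (hbar - m))) :
    ∀ i, 0 ≤ θ * (h i - hbar) + hbar :=
  limiter_nonneg_general h hbar hbar_nonneg m hm hmlt θ hθ
end

section
/- Under the time step restrictions Δt ≤ ω₀a/(A + 2ū) whenever A + 2ū > 0, and, when h⁻ > 0 and B[[u]] < 0, Δt ≤ |g ω₀ a h⁻/(c̄ B [[u]])|, and assuming h⁺, h⁻ ≥ 0 and h⁻ = 0 implies u⁻ = 0, the quantity (1/2)h⁻ - (Δt/(ω₀a))·F₁ is nonnegative, where F₁ = h̄ū - (1/(4g))(gA[[h]] + c̄B[[u]]) is the entropy stable water-height flux with c̄ = (√(g h⁺) + √(g h⁻))/2. -/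
/-!
Multiplying by `4g`, the flux splits as
`4g F₁ = g h⁺ (2ū - A) + g h⁻ (A + 2ū) - c̄ B [[u]]`.
The first term is nonpositive since `2ū ≤ A`, the second is at most `g h⁻ ω₀ a / Δt` by the
first time step restriction, and the third is at most `g h⁻ ω₀ a / Δt` as well: by the second
restriction when `h⁻ > 0`, and because `c̄ B [[u]] = 2 c̄ B ū ≥ 0` when the left state is dry.
-/

lemma abs_add_sub_abs_sub_mul_self_nonneg {u c : ℝ} (hc : 0 ≤ c) :
    0 ≤ (|u + c| - |u - c|) * u := by
  rcases abs_cases (u + c) with ⟨h₁, _⟩ | ⟨h₁, _⟩ <;>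
    rcases abs_cases (u - c) with ⟨h₂, _⟩ | ⟨h₂, _⟩ <;>
    rw [h₁, h₂] <;> nlinarith [sq_nonneg u]

theorem surface_update_nonneg_general
    (hp hm up um g dt w0 a : ℝ)
    (hg : 0 < g) (hdt : 0 < dt) (hw0 : 0 < w0) (ha : 0 < a)
    (hhp : 0 ≤ hp) (hhm : 0 ≤ hm)
    (hdrym : hm = 0 → um = 0)
    (ubar c A B F1 : ℝ)
    (hub : ubar = (up + um) / 2)
    (hc : c = (Real.sqrt (g * hp) + Real.sqrt (g * hm)) / 2)
    (hA : A = |ubar + c| + |ubar - c|) (hB : B = |ubar + c| - |ubar - c|)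
    (hF1 : F1 = ((hp + hm) / 2) * ubar
        - (1 / (4 * g)) * (g * A * (hp - hm) + c * B * (up - um)))
    (hdt1 : dt * (A + 2 * ubar) ≤ w0 * a)
    (hdt2 : 0 < hm → c * B * (up - um) < 0 →
      dt * |c * B * (up - um)| ≤ g * w0 * a * hm) :
    0 ≤ (1 / 2) * hm - (dt / (w0 * a)) * F1 := by
  have hc0 : 0 ≤ c := hc ▸ by positivity
  have hwa : 0 < w0 * a := mul_pos hw0 ha
  have hubA : 2 * ubar ≤ A := by
    rw [hA]; linarith [le_abs_self (ubar + c), le_abs_self (ubar - c)]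
  have hT : -(g * w0 * a * hm) ≤ dt * (c * B * (up - um)) := by
    by_contra! hlt
    have hneg : c * B * (up - um) < 0 := by
      by_contra! hpos
      nlinarith [mul_nonneg hdt.le hpos, mul_nonneg (mul_nonneg hg.le hwa.le) hhm]
    rcases hhm.lt_or_eq with hm0 | hm0
    · have h := hdt2 hm0 hneg
      rw [abs_of_neg hneg] at h
      linarith
    · have hum := hdrym hm0.symm
      have hdry : c * B * (up - um) = 2 * c * (B * ubar) := by rw [hub, hum]; ring
      have := mul_nonneg hc0 (hB ▸ abs_add_sub_abs_sub_mul_self_nonneg (u := ubar) hc0)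
      linarith
  have hflux : 4 * g * (dt * F1) = g * hp * (dt * (2 * ubar - A))
      + g * hm * (dt * (A + 2 * ubar)) - dt * (c * B * (up - um)) := by
    rw [hF1]; field_simp; ring
  have hhp_term : g * hp * (dt * (2 * ubar - A)) ≤ 0 :=
    mul_nonpos_of_nonneg_of_nonpos (by positivity)
      (mul_nonpos_of_nonneg_of_nonpos hdt.le (by linarith))
  have hhm_term : g * hm * (dt * (A + 2 * ubar)) ≤ g * hm * (w0 * a) :=
    mul_le_mul_of_nonneg_left hdt1 (by positivity)
  have hF : dt * F1 ≤ (1 / 2) * hm * (w0 * a) := by nlinarith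
  rw [sub_nonneg, div_mul_eq_mul_div _ _ F1, div_le_iff₀ hwa]
  exact hF

/-- Positivity of the surface update term for the entropy stable water-height
flux under the time step restrictions of Lemma (Preservation of non-negative
mean water heights). -/
theorem surface_update_nonneg
    (hp hm up um g dt w0 a : ℝ)
    (hg : 0 < g) (hdt : 0 < dt) (hw0 : 0 < w0) (ha : 0 < a)
    (hhp : 0 ≤ hp) (hhm : 0 ≤ hm)
    (hdrym : hm = 0 → um = 0) (hdryp : hp = 0 → up = 0)
    (ubar c A B F1 : ℝ)
    (hub : ubar = (up + um) / 2)
    (hc : c = (Real.sqrt (g * hp) + Real.sqrt (g * hm)) / 2)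
    (hA : A = |ubar + c| + |ubar - c|) (hB : B = |ubar + c| - |ubar - c|)
    (hF1 : F1 = ((hp + hm) / 2) * ubar
        - (1 / (4 * g)) * (g * A * (hp - hm) + c * B * (up - um)))
    (hdt1 : dt * (A + 2 * ubar) ≤ w0 * a)
    (hdt2 : 0 < hm → c * B * (up - um) < 0 →
      dt * |c * B * (up - um)| ≤ g * w0 * a * hm) :
    0 ≤ (1 / 2) * hm - (dt / (w0 * a)) * F1 :=
  surface_update_nonneg_general hp hm up um g dt w0 a hg hdt hw0 ha hhp hhm hdrym ubar c A B F1 hub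
    hc hA hB hF1 hdt1 hdt2
end
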